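/- arXiv:1810.03423 — 5 statements merged into one kernel-verified Lean document; each statement's English description precedes it below -/
import Mathlib

section
/- In any family of compatible frames (F, R), the conditional independence relation between frames satisfies: (C1) Θ ⊥ Λ | Λ for all frames Θ, Λ ∈ F; (C2) Θ₁ ⊥ Θ₂ | Λ implies Θ₂ ⊥ Θ₁ | Λ; (C3) Θ₁ ⊥ Θ₂ | Λ and Θ ≤ Θ₂ imply Θ₁ ⊥ Θ | Λ; (C4) Θ₁ ⊥ Θ₂ | Λ implies Θ₁ ⊥ (Θ₂ ∨ Λ) | Λ. That is, (F, ≤, ⊥) is a quasi-separoid. -/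
open scoped NNReal

/-- A family of compatible frames (f.c.f.): a collection of finite nonempty frames
together with (unique) refinings between them, closed under composition, containing
identities, with minimal common refinements (binary joins). -/
structure FCF where
  /-- the frames of the family -/
  Frame : Type
  /-- the elements of each frame -/
  El : Frame → Type
  elFintype : ∀ Θ, Fintype (El Θ)
  elNonempty : ∀ Θ, Nonempty (El Θ)
  /-- `le Θ Λ` holds iff the family contains a refining of `Θ` to `Λ`. -/
  le : Frame → Frame → Prop
  le_refl : ∀ Θ, le Θ Θ
  le_trans : ∀ {Θ Λ Ξ}, le Θ Λ → le Λ Ξ → le Θ Ξ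
  le_antisymm : ∀ {Θ Λ}, le Θ Λ → le Λ Θ → Θ = Λ
  /-- the (unique) refining map of `Θ` to `Λ`, when `le Θ Λ` -/
  τ : ∀ {Θ Λ}, le Θ Λ → El Θ → Set (El Λ)
  τ_nonempty : ∀ {Θ Λ} (h : le Θ Λ) (θ : El Θ), (τ h θ).Nonempty
  τ_disjoint : ∀ {Θ Λ} (h : le Θ Λ) (θ θ' : El Θ), θ ≠ θ' → τ h θ ∩ τ h θ' = ∅
  τ_cover : ∀ {Θ Λ} (h : le Θ Λ) (x : El Λ), ∃ θ, x ∈ τ h θ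
  /-- the identity refining -/
  τ_refl : ∀ {Θ} (h : le Θ Θ) (θ : El Θ), τ h θ = {θ}
  /-- closure under composition of refinings -/
  τ_comp : ∀ {Θ Λ Ξ} (h₁ : le Θ Λ) (h₂ : le Λ Ξ) (h₃ : le Θ Ξ) (θ : El Θ),
    τ h₃ θ = ⋃ lam ∈ τ h₁ θ, τ h₂ lam
  /-- identity of coarsenings: two coarsenings of a frame with the same blocks coincide -/
  coarsening_unique : ∀ {Θ₁ Θ₂ Λ} (h₁ : le Θ₁ Λ) (h₂ : le Θ₂ Λ),
    (∀ θ₁, ∃ θ₂, τ h₁ θ₁ = τ h₂ θ₂) → (∀ θ₂, ∃ θ₁, τ h₁ θ₁ = τ h₂ θ₂) → Θ₁ = Θ₂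
  /-- minimal common refinement of two frames -/
  sup : Frame → Frame → Frame
  le_sup_left : ∀ Θ Λ, le Θ (sup Θ Λ)
  le_sup_right : ∀ Θ Λ, le Λ (sup Θ Λ)
  sup_le : ∀ {Θ Λ Ξ}, le Θ Ξ → le Λ Ξ → le (sup Θ Λ) Ξ
  /-- every element of the minimal common refinement is the (unique) intersection point
  of a block of each factor -/
  sup_atom : ∀ {Θ Λ} (h₁ : le Θ (sup Θ Λ)) (h₂ : le Λ (sup Θ Λ)) (x : El (sup Θ Λ)),
    ∃ (θ : El Θ) (lam : El Λ), τ h₁ θ ∩ τ h₂ lam = {x}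

namespace FCF

instance (F : FCF) (Θ : F.Frame) : Fintype (F.El Θ) := F.elFintype Θ

instance (F : FCF) (Θ : F.Frame) : Nonempty (F.El Θ) := F.elNonempty Θ

instance instSemilatticeSup (F : FCF) : SemilatticeSup F.Frame where
  le := F.le
  le_refl := F.le_refl
  le_trans := fun _ _ _ => F.le_trans
  le_antisymm := fun _ _ => F.le_antisymm
  sup := F.sup
  le_sup_left := F.le_sup_left
  le_sup_right := F.le_sup_right
  sup_le := fun _ _ _ h h' => F.sup_le h h'

/-- the indicator potential `f_p` of the support of a potential -/
noncomputable def fpot {X : Type} (p : X → ℝ≥0) : X → ℝ≥0 := fun x =>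
  haveI := Classical.propDecidable (0 < p x)
  if 0 < p x then 1 else 0

/-- the support of a potential -/
def psupp {X : Type} (p : X → ℝ≥0) : Set X := {x | 0 < p x}

/-- the likelihood (plausibility of singletons) function of a set potential -/
noncomputable def plfn {X : Type} (m : Set X → ℝ≥0) : X → ℝ≥0 :=
  fun x => ∑ᶠ (S : Set X) (_ : x ∈ S), m S

variable (F : FCF)

/-- `θ` and `lam` are compatible: their refinings to the minimal common refinement
of the two frames intersect. -/
def compat {Θ Λ : F.Frame} (θ : F.El Θ) (lam : F.El Λ) : Prop :=
  (F.τ (F.le_sup_left Θ Λ) θ ∩ F.τ (F.le_sup_right Θ Λ) lam).Nonempty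

/-- `(θ₁, θ₂, lam) ∈ R(Θ₁, Θ₂, Λ)`: joint compatibility of a triple. -/
def compat3 {Θ₁ Θ₂ Λ : F.Frame} (θ₁ : F.El Θ₁) (θ₂ : F.El Θ₂) (lam : F.El Λ) : Prop :=
  (F.τ (F.le_trans (F.le_sup_left Θ₁ Θ₂) (F.le_sup_left (F.sup Θ₁ Θ₂) Λ)) θ₁ ∩
    F.τ (F.le_trans (F.le_sup_right Θ₁ Θ₂) (F.le_sup_left (F.sup Θ₁ Θ₂) Λ)) θ₂ ∩
    F.τ (F.le_sup_right (F.sup Θ₁ Θ₂) Λ) lam).Nonempty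

/-- `Θ₁ ⊥ Θ₂ | Λ` : conditional independence of two frames given a third,
`R_λ(Θ₁,Θ₂) = R_λ(Θ₁) × R_λ(Θ₂)` for every `λ ∈ Λ`. -/
def CondIndep (Θ₁ Θ₂ Λ : F.Frame) : Prop :=
  ∀ (lam : F.El Λ) (θ₁ : F.El Θ₁) (θ₂ : F.El Θ₂),
    F.compat3 θ₁ θ₂ lam ↔ (F.compat θ₁ lam ∧ F.compat θ₂ lam)

/-- joint compatibility of a family of elements together with `lam`. -/
def compatFam {ι : Type} {Θ : ι → F.Frame} {Λ : F.Frame}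
    (θ : ∀ i, F.El (Θ i)) (lam : F.El Λ) : Prop :=
  ∃ (Ξ : F.Frame) (hΘ : ∀ i, F.le (Θ i) Ξ) (hΛ : F.le Λ Ξ) (x : F.El Ξ),
    (∀ i, x ∈ F.τ (hΘ i) (θ i)) ∧ x ∈ F.τ hΛ lam

/-- `⊥ {Θ_i : i ∈ ι} | Λ` : conditional independence of a family of frames given `Λ`,
`R_λ(Θ₁,…,Θₙ) = R_λ(Θ₁) × ⋯ × R_λ(Θₙ)` for every `λ ∈ Λ`. -/
def CondIndepFam {ι : Type} (Θ : ι → F.Frame) (Λ : F.Frame) : Prop :=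
  ∀ (lam : F.El Λ) (θ : ∀ i, F.El (Θ i)),
    F.compatFam θ lam ↔ ∀ i, F.compat (θ i) lam

/-- `t_Λ(x)`, the unique element of the coarsening `Λ` whose block contains `x`. -/
noncomputable def proj {Λ Θ : F.Frame} (h : F.le Λ Θ) (x : F.El Θ) : F.El Λ :=
  (F.τ_cover h x).choose

/-- probability potentials on the frame `Θ` -/
abbrev Pot (Θ : F.Frame) : Type := F.El Θ → ℝ≥0

/-- the combination of two probability potentials, on the join of their domains -/
noncomputable def combine {Θ₁ Θ₂ : F.Frame} (p₁ : F.Pot Θ₁) (p₂ : F.Pot Θ₂) :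
    F.Pot (F.sup Θ₁ Θ₂) :=
  fun x => p₁ (F.proj (F.le_sup_left Θ₁ Θ₂) x) * p₂ (F.proj (F.le_sup_right Θ₁ Θ₂) x)

/-- the transport `π_Λ(p)` of a probability potential to the frame `Λ` -/
noncomputable def transport {Θ : F.Frame} (p : F.Pot Θ) (Λ : F.Frame) : F.Pot Λ :=
  fun lam => ∑ᶠ (θ : F.El Θ) (_ : F.compat θ lam), p θ

/-- the max-transport `t^max_Λ(p)` of a probability potential to the frame `Λ` -/
noncomputable def maxTransport {Θ : F.Frame} (p : F.Pot Θ) (Λ : F.Frame) : F.Pot Λ :=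
  fun lam => ⨆ (θ : F.El Θ) (_ : F.compat θ lam), p θ

/-- combination of two set potentials, on the join of their domains -/
noncomputable def setCombine {Θ₁ Θ₂ : F.Frame} (m₁ : Set (F.El Θ₁) → ℝ≥0)
    (m₂ : Set (F.El Θ₂) → ℝ≥0) : Set (F.El (F.sup Θ₁ Θ₂)) → ℝ≥0 :=
  fun S => ∑ᶠ (S₁ : Set (F.El Θ₁)) (S₂ : Set (F.El Θ₂))
    (_ : (⋃ θ ∈ S₁, F.τ (F.le_sup_left Θ₁ Θ₂) θ) ∩
         (⋃ θ ∈ S₂, F.τ (F.le_sup_right Θ₁ Θ₂) θ) = S),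
    m₁ S₁ * m₂ S₂

/-- the conditional `p_{Θ|Λ} = π_Θ(p) · (π_Λ(p))⁻¹` of `p` for `Θ` given `Λ ≤ Θ` -/
noncomputable def condl {Δ : F.Frame} (p : F.Pot Δ) {Λ Θ : F.Frame} (h : F.le Λ Θ) :
    F.Pot Θ :=
  fun θ => F.transport p Θ θ * (F.transport p Λ (F.proj h θ))⁻¹

/-- the conditional `p_{Θ|Λ} = π_{Θ∨Λ}(p) · (π_Λ(p))⁻¹` of `p` for arbitrary `Θ` given `Λ` -/
noncomputable def condl2 {Δ : F.Frame} (p : F.Pot Δ) (Θ Λ : F.Frame) :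
    F.Pot (F.sup Θ Λ) :=
  fun x => F.transport p (F.sup Θ Λ) x *
    (F.transport p Λ (F.proj (F.le_sup_right Θ Λ) x))⁻¹

/-- the solution set `s_p^Λ(lam)`: maximizers of `p` among elements compatible with `lam` -/
noncomputable def solSet {Θ : F.Frame} (p : F.Pot Θ) (Λ : F.Frame) (lam : F.El Λ) :
    Set (F.El Θ) :=
  {θ | F.compat θ lam ∧ p θ = F.maxTransport p Λ lam}

end FCF

namespace FCF

variable {F : FCF}

lemma eq_of_mem_τ {Θ Λ : F.Frame} (h : F.le Θ Λ) {θ θ' : F.El Θ} {x : F.El Λ}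
    (hx : x ∈ F.τ h θ) (hx' : x ∈ F.τ h θ') : θ = θ' := by
  by_contra hne
  have hd := F.τ_disjoint h θ θ' hne
  have : x ∈ F.τ h θ ∩ F.τ h θ' := ⟨hx, hx'⟩
  rw [hd] at this
  exact this

lemma mem_block_iff {Θ Λ Ξ : F.Frame} (h₁ : F.le Θ Λ) (h₂ : F.le Λ Ξ) (h₃ : F.le Θ Ξ)
    {θ : F.El Θ} {y : F.El Λ} {x : F.El Ξ} (hx : x ∈ F.τ h₂ y) :
    x ∈ F.τ h₃ θ ↔ y ∈ F.τ h₁ θ := by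
  rw [F.τ_comp h₁ h₂ h₃]
  constructor
  · intro h
    simp only [Set.mem_iUnion] at h
    obtain ⟨l, hl, hxl⟩ := h
    rwa [eq_of_mem_τ h₂ hx hxl]
  · intro hy
    exact Set.mem_biUnion hy hx

lemma compat_iff {Θ Λ Ξ : F.Frame} (hΘ : F.le Θ Ξ) (hΛ : F.le Λ Ξ)
    (θ : F.El Θ) (lam : F.El Λ) :
    F.compat θ lam ↔ ∃ x, x ∈ F.τ hΘ θ ∧ x ∈ F.τ hΛ lam := by
  have h : F.le (F.sup Θ Λ) Ξ := F.sup_le hΘ hΛ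
  constructor
  · rintro ⟨s, hs1, hs2⟩
    obtain ⟨x, hx⟩ := F.τ_nonempty h s
    exact ⟨x, (mem_block_iff (F.le_sup_left Θ Λ) h hΘ hx).mpr hs1,
      (mem_block_iff (F.le_sup_right Θ Λ) h hΛ hx).mpr hs2⟩
  · rintro ⟨x, h1, h2⟩
    obtain ⟨s, hs⟩ := F.τ_cover h x
    exact ⟨s, (mem_block_iff (F.le_sup_left Θ Λ) h hΘ hs).mp h1,
      (mem_block_iff (F.le_sup_right Θ Λ) h hΛ hs).mp h2⟩

lemma compat3_iff {Θ₁ Θ₂ Λ Ξ : F.Frame} (h₁ : F.le Θ₁ Ξ) (h₂ : F.le Θ₂ Ξ) (hΛ : F.le Λ Ξ)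
    (θ₁ : F.El Θ₁) (θ₂ : F.El Θ₂) (lam : F.El Λ) :
    F.compat3 θ₁ θ₂ lam ↔ ∃ x, x ∈ F.τ h₁ θ₁ ∧ x ∈ F.τ h₂ θ₂ ∧ x ∈ F.τ hΛ lam := by
  have h : F.le (F.sup (F.sup Θ₁ Θ₂) Λ) Ξ := F.sup_le (F.sup_le h₁ h₂) hΛ
  have a₁ : F.le Θ₁ (F.sup (F.sup Θ₁ Θ₂) Λ) :=
    F.le_trans (F.le_sup_left Θ₁ Θ₂) (F.le_sup_left (F.sup Θ₁ Θ₂) Λ)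
  have a₂ : F.le Θ₂ (F.sup (F.sup Θ₁ Θ₂) Λ) :=
    F.le_trans (F.le_sup_right Θ₁ Θ₂) (F.le_sup_left (F.sup Θ₁ Θ₂) Λ)
  have aΛ : F.le Λ (F.sup (F.sup Θ₁ Θ₂) Λ) := F.le_sup_right (F.sup Θ₁ Θ₂) Λ
  constructor
  · rintro ⟨s, ⟨hs1, hs2⟩, hs3⟩
    obtain ⟨x, hx⟩ := F.τ_nonempty h s
    exact ⟨x, (mem_block_iff a₁ h h₁ hx).mpr hs1, (mem_block_iff a₂ h h₂ hx).mpr hs2,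
      (mem_block_iff aΛ h hΛ hx).mpr hs3⟩
  · rintro ⟨x, k1, k2, k3⟩
    obtain ⟨s, hs⟩ := F.τ_cover h x
    exact ⟨s, ⟨(mem_block_iff a₁ h h₁ hs).mp k1, (mem_block_iff a₂ h h₂ hs).mp k2⟩,
      (mem_block_iff aΛ h hΛ hs).mp k3⟩

/-- In any family of compatible frames, conditional independence of
frames satisfies C1–C4, i.e. `(F, ≤, ⊥)` is a quasi-separoid. -/
theorem condIndep_quasiSeparoid (F : FCF) :
    (∀ Θ Λ : F.Frame, F.CondIndep Θ Λ Λ) ∧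
    (∀ Θ₁ Θ₂ Λ : F.Frame, F.CondIndep Θ₁ Θ₂ Λ → F.CondIndep Θ₂ Θ₁ Λ) ∧
    (∀ Θ₁ Θ₂ Θ Λ : F.Frame, F.CondIndep Θ₁ Θ₂ Λ → F.le Θ Θ₂ → F.CondIndep Θ₁ Θ Λ) ∧
    (∀ Θ₁ Θ₂ Λ : F.Frame, F.CondIndep Θ₁ Θ₂ Λ → F.CondIndep Θ₁ (F.sup Θ₂ Λ) Λ) := by
  refine ⟨?_, ?_, ?_, ?_⟩
  · -- C1
    intro Θ Λ lam θ₁ θ₂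
    have hΘ := F.le_sup_left Θ Λ
    have hΛ := F.le_sup_right Θ Λ
    rw [compat3_iff hΘ hΛ hΛ, compat_iff hΘ hΛ, compat_iff hΛ hΛ]
    constructor
    · rintro ⟨x, k1, k2, k3⟩
      exact ⟨⟨x, k1, k3⟩, ⟨x, k2, k3⟩⟩
    · rintro ⟨⟨x, k1, k3⟩, ⟨y, k2, k3'⟩⟩
      have he : θ₂ = lam := eq_of_mem_τ hΛ k2 k3'
      exact ⟨x, k1, by rw [he]; exact k3, k3⟩
  · -- C2
    intro Θ₁ Θ₂ Λ hCI lam θ₂ θ₁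
    have h₁ : F.le Θ₁ (F.sup (F.sup Θ₁ Θ₂) Λ) :=
      F.le_trans (F.le_sup_left Θ₁ Θ₂) (F.le_sup_left (F.sup Θ₁ Θ₂) Λ)
    have h₂ : F.le Θ₂ (F.sup (F.sup Θ₁ Θ₂) Λ) :=
      F.le_trans (F.le_sup_right Θ₁ Θ₂) (F.le_sup_left (F.sup Θ₁ Θ₂) Λ)
    have hΛ : F.le Λ (F.sup (F.sup Θ₁ Θ₂) Λ) := F.le_sup_right (F.sup Θ₁ Θ₂) Λ
    rw [compat3_iff h₂ h₁ hΛ]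
    constructor
    · rintro ⟨x, k2, k1, k3⟩
      have := (hCI lam θ₁ θ₂).mp ((compat3_iff h₁ h₂ hΛ θ₁ θ₂ lam).mpr ⟨x, k1, k2, k3⟩)
      exact ⟨this.2, this.1⟩
    · rintro ⟨c2, c1⟩
      obtain ⟨x, k1, k2, k3⟩ :=
        (compat3_iff h₁ h₂ hΛ θ₁ θ₂ lam).mp ((hCI lam θ₁ θ₂).mpr ⟨c1, c2⟩)
      exact ⟨x, k2, k1, k3⟩
  · -- C3
    intro Θ₁ Θ₂ Θ Λ hCI hle lam θ₁ θ
    have h₁ : F.le Θ₁ (F.sup (F.sup Θ₁ Θ₂) Λ) :=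
      F.le_trans (F.le_sup_left Θ₁ Θ₂) (F.le_sup_left (F.sup Θ₁ Θ₂) Λ)
    have h₂ : F.le Θ₂ (F.sup (F.sup Θ₁ Θ₂) Λ) :=
      F.le_trans (F.le_sup_right Θ₁ Θ₂) (F.le_sup_left (F.sup Θ₁ Θ₂) Λ)
    have hΛ : F.le Λ (F.sup (F.sup Θ₁ Θ₂) Λ) := F.le_sup_right (F.sup Θ₁ Θ₂) Λ
    have hΘ : F.le Θ (F.sup (F.sup Θ₁ Θ₂) Λ) := F.le_trans hle h₂
    rw [compat3_iff h₁ hΘ hΛ, compat_iff h₁ hΛ, compat_iff hΘ hΛ]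
    constructor
    · rintro ⟨x, k1, k2, k3⟩
      exact ⟨⟨x, k1, k3⟩, ⟨x, k2, k3⟩⟩
    · rintro ⟨⟨x, kx1, kx3⟩, ⟨y, ky2, ky3⟩⟩
      obtain ⟨θ₂, hθ₂⟩ := F.τ_cover h₂ y
      have hsub : F.τ h₂ θ₂ ⊆ F.τ hΘ θ := by
        intro z hz
        exact (mem_block_iff hle h₂ hΘ hz).mpr ((mem_block_iff hle h₂ hΘ hθ₂).mp ky2)
      have c2 : F.compat θ₂ lam := (compat_iff h₂ hΛ θ₂ lam).mpr ⟨y, hθ₂, ky3⟩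
      have c1 : F.compat θ₁ lam := (compat_iff h₁ hΛ θ₁ lam).mpr ⟨x, kx1, kx3⟩
      obtain ⟨z, kz1, kz2, kz3⟩ :=
        (compat3_iff h₁ h₂ hΛ θ₁ θ₂ lam).mp ((hCI lam θ₁ θ₂).mpr ⟨c1, c2⟩)
      exact ⟨z, kz1, hsub kz2, kz3⟩
  · -- C4
    intro Θ₁ Θ₂ Λ hCI lam θ₁ μ
    have h₁ : F.le Θ₁ (F.sup (F.sup Θ₁ Θ₂) Λ) :=
      F.le_trans (F.le_sup_left Θ₁ Θ₂) (F.le_sup_left (F.sup Θ₁ Θ₂) Λ)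
    have h₂ : F.le Θ₂ (F.sup (F.sup Θ₁ Θ₂) Λ) :=
      F.le_trans (F.le_sup_right Θ₁ Θ₂) (F.le_sup_left (F.sup Θ₁ Θ₂) Λ)
    have hΛ : F.le Λ (F.sup (F.sup Θ₁ Θ₂) Λ) := F.le_sup_right (F.sup Θ₁ Θ₂) Λ
    have hM : F.le (F.sup Θ₂ Λ) (F.sup (F.sup Θ₁ Θ₂) Λ) := F.sup_le h₂ hΛ
    rw [compat3_iff h₁ hM hΛ, compat_iff h₁ hΛ, compat_iff hM hΛ]
    constructor
    · rintro ⟨x, k1, k2, k3⟩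
      exact ⟨⟨x, k1, k3⟩, ⟨x, k2, k3⟩⟩
    · rintro ⟨⟨x, kx1, kx3⟩, ⟨y, ky2, ky3⟩⟩
      obtain ⟨θ₂, hθ₂⟩ := F.τ_cover (F.le_sup_left Θ₂ Λ) μ
      obtain ⟨lam', hlam'⟩ := F.τ_cover (F.le_sup_right Θ₂ Λ) μ
      have hy2 : y ∈ F.τ h₂ θ₂ := (mem_block_iff (F.le_sup_left Θ₂ Λ) hM h₂ ky2).mpr hθ₂
      have hylam' : y ∈ F.τ hΛ lam' :=
        (mem_block_iff (F.le_sup_right Θ₂ Λ) hM hΛ ky2).mpr hlam'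
      have hll : lam' = lam := eq_of_mem_τ hΛ hylam' ky3
      subst hll
      have c2 : F.compat θ₂ lam' := (compat_iff h₂ hΛ θ₂ lam').mpr ⟨y, hy2, ky3⟩
      have c1 : F.compat θ₁ lam' := (compat_iff h₁ hΛ θ₁ lam').mpr ⟨x, kx1, kx3⟩
      obtain ⟨z, kz1, kz2, kz3⟩ :=
        (compat3_iff h₁ h₂ hΛ θ₁ θ₂ lam').mp ((hCI lam' θ₁ θ₂).mpr ⟨c1, c2⟩)
      obtain ⟨μ', hμ'⟩ := F.τ_cover hM z
      have hz2 : μ' ∈ F.τ (F.le_sup_left Θ₂ Λ) θ₂ :=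
        (mem_block_iff (F.le_sup_left Θ₂ Λ) hM h₂ hμ').mp kz2
      have hz3 : μ' ∈ F.τ (F.le_sup_right Θ₂ Λ) lam' :=
        (mem_block_iff (F.le_sup_right Θ₂ Λ) hM hΛ hμ').mp kz3
      obtain ⟨θ', l', hsing⟩ :=
        F.sup_atom (F.le_sup_left Θ₂ Λ) (F.le_sup_right Θ₂ Λ) μ
      have hμmem : μ ∈ F.τ (F.le_sup_left Θ₂ Λ) θ' ∩ F.τ (F.le_sup_right Θ₂ Λ) l' :=
        hsing.symm.subset rfl
      have hθeq : θ' = θ₂ := eq_of_mem_τ (F.le_sup_left Θ₂ Λ) hμmem.1 hθ₂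
      have hleq : l' = lam' := eq_of_mem_τ (F.le_sup_right Θ₂ Λ) hμmem.2 hlam'
      rw [hθeq, hleq] at hsing
      have hμ'eq : μ' = μ := by
        have : μ' ∈ ({μ} : Set (F.El (F.sup Θ₂ Λ))) := hsing ▸ ⟨hz2, hz3⟩
        exact this
      exact ⟨z, kz1, by rw [← hμ'eq]; exact hμ', kz3⟩

end FCF
end

section
/- Let (F, R) be a family of compatible frames, Θ, Λ, Λ₁ ∈ F with Θ ⊥ Λ | Λ₁. If λ ∈ Λ and λ₁ ∈ Λ₁ are compatible (λ ∼ λ₁), then R_{λ₁}(Θ) ⊆ R_λ(Θ); that is, every θ ∈ Θ with θ ∼ λ₁ also satisfies θ ∼ λ. -/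
open scoped NNReal

namespace FCF

/-- If `Θ ⊥ Λ | Λ₁` and `λ ∼ λ₁`, then every `θ ∈ Θ` compatible with
`λ₁` is also compatible with `λ`, i.e. `R_{λ₁}(Θ) ⊆ R_λ(Θ)`. -/
theorem compat_of_compat_of_condIndep (F : FCF) (Θ Λ Λ₁ : F.Frame)
    (h : F.CondIndep Θ Λ Λ₁) (lam : F.El Λ) (lam1 : F.El Λ₁)
    (hc : F.compat lam lam1) :
    ∀ θ : F.El Θ, F.compat θ lam1 → F.compat θ lam := by
  intro θ hθ
  have h3 : F.compat3 θ lam lam1 := (h lam1 θ lam).mpr ⟨hθ, hc⟩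
  obtain ⟨x, ⟨hx1, hx2⟩, _⟩ := h3
  rw [F.τ_comp (F.le_sup_left Θ Λ) (F.le_sup_left (F.sup Θ Λ) Λ₁) _ θ] at hx1
  rw [F.τ_comp (F.le_sup_right Θ Λ) (F.le_sup_left (F.sup Θ Λ) Λ₁) _ lam] at hx2
  simp only [Set.mem_iUnion] at hx1 hx2
  obtain ⟨y, hy, hxy⟩ := hx1
  obtain ⟨y', hy', hxy'⟩ := hx2
  have hyy : y = y' := by
    by_contra hne
    have hd := F.τ_disjoint (F.le_sup_left (F.sup Θ Λ) Λ₁) y y' hne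
    exact Set.eq_empty_iff_forall_notMem.mp hd x ⟨hxy, hxy'⟩
  exact ⟨y, hy, hyy ▸ hy'⟩

end FCF
end

section
/- Let (F, R) be a family of compatible frames and Θ, Λ, Λ₁ ∈ F. If θ ∈ Θ and λ ∈ Λ are compatible (θ ∼ λ), then there exists λ₁ ∈ Λ₁ such that (θ, λ, λ₁) ∈ R(Θ, Λ, Λ₁), and moreover θ ∼ λ₁ and λ ∼ λ₁. -/
open scoped NNReal

namespace FCF


/-- If the blocks of `θ` and `lam` in some common refinement `Ξ` share a point,
then `θ ∼ lam`. -/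
theorem compat_of_mem (F : FCF) {Θ Λ Ξ : F.Frame} (h1 : F.le Θ Ξ) (h2 : F.le Λ Ξ)
    {θ : F.El Θ} {lam : F.El Λ} {x : F.El Ξ}
    (hx1 : x ∈ F.τ h1 θ) (hx2 : x ∈ F.τ h2 lam) : F.compat θ lam := by
  set S := F.sup Θ Λ with hSdef
  have hS : F.le S Ξ := F.sup_le h1 h2
  obtain ⟨w, hw⟩ := F.τ_cover hS x
  have key : ∀ (Δ : F.Frame) (hΔ : F.le Δ S) (hΔΞ : F.le Δ Ξ) (d : F.El Δ),
      x ∈ F.τ hΔΞ d → w ∈ F.τ hΔ d := by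
    intro Δ hΔ hΔΞ d hxd
    rw [F.τ_comp hΔ hS hΔΞ d] at hxd
    simp only [Set.mem_iUnion] at hxd
    obtain ⟨w', hw', hxw'⟩ := hxd
    by_cases hww : w' = w
    · rwa [hww] at hw'
    · exfalso
      have := F.τ_disjoint hS w' w hww
      have : x ∈ F.τ hS w' ∩ F.τ hS w := ⟨hxw', hw⟩
      rw [F.τ_disjoint hS w' w hww] at this
      exact this
  exact ⟨w, key Θ (F.le_sup_left Θ Λ) h1 θ hx1,
    key Λ (F.le_sup_right Θ Λ) h2 lam hx2⟩

/-- If `θ ∼ λ` then there is a `λ₁ ∈ Λ₁` such that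
`(θ, λ, λ₁) ∈ R(Θ, Λ, Λ₁)`, `θ ∼ λ₁` and `λ ∼ λ₁`. -/
theorem exists_compat_third (F : FCF) (Θ Λ Λ₁ : F.Frame) (θ : F.El Θ) (lam : F.El Λ)
    (h : F.compat θ lam) :
    ∃ lam1 : F.El Λ₁, F.compat3 θ lam lam1 ∧ F.compat θ lam1 ∧ F.compat lam lam1 := by
  classical
  obtain ⟨x, hxθ, hxlam⟩ := h
  have h1 : F.le (F.sup Θ Λ) (F.sup (F.sup Θ Λ) Λ₁) := F.le_sup_left _ _
  have h2 : F.le Λ₁ (F.sup (F.sup Θ Λ) Λ₁) := F.le_sup_right _ _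
  obtain ⟨y, hy⟩ := F.τ_nonempty h1 x
  obtain ⟨lam1, hylam1⟩ := F.τ_cover h2 y
  have hyθ : y ∈ F.τ (F.le_trans (F.le_sup_left Θ Λ) h1) θ := by
    rw [F.τ_comp (F.le_sup_left Θ Λ) h1 _ θ]
    simp only [Set.mem_iUnion]
    exact ⟨x, hxθ, hy⟩
  have hylam : y ∈ F.τ (F.le_trans (F.le_sup_right Θ Λ) h1) lam := by
    rw [F.τ_comp (F.le_sup_right Θ Λ) h1 _ lam]
    simp only [Set.mem_iUnion]
    exact ⟨x, hxlam, hy⟩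
  exact ⟨lam1, ⟨y, ⟨hyθ, hylam⟩, hylam1⟩,
    F.compat_of_mem _ h2 hyθ hylam1,
    F.compat_of_mem _ h2 hylam hylam1⟩


end FCF
end

section
/- For any two set potentials m₁ and m₂ on frames Θ₁ and Θ₂ of a family of compatible frames, the likelihood function of their combination equals the combination of their likelihood functions: pl_{m₁·m₂} = pl_{m₁} · pl_{m₂}, i.e., for every θ ∈ Θ₁ ∨ Θ₂, pl_{m₁·m₂}(θ) = pl_{m₁}(t_{Θ₁}(θ)) · pl_{m₂}(t_{Θ₂}(θ)). -/
open scoped NNReal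

namespace FCF

lemma mem_τ_proj (F : FCF) {Λ Θ : F.Frame} (h : F.le Λ Θ) (x : F.El Θ) :
    x ∈ F.τ h (F.proj h x) := (F.τ_cover h x).choose_spec

lemma proj_eq_of_mem (F : FCF) {Λ Θ : F.Frame} (h : F.le Λ Θ) {x : F.El Θ}
    {θ : F.El Λ} (hx : x ∈ F.τ h θ) : F.proj h x = θ := by
  by_contra hne
  have hd := F.τ_disjoint h _ _ hne
  have hmem : x ∈ F.τ h (F.proj h x) ∩ F.τ h θ := ⟨F.mem_τ_proj h x, hx⟩
  rw [hd] at hmem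
  exact hmem

lemma mem_blocks_iff (F : FCF) {Λ Θ : F.Frame} (h : F.le Λ Θ) (x : F.El Θ)
    (S : Set (F.El Λ)) : (x ∈ ⋃ θ ∈ S, F.τ h θ) ↔ F.proj h x ∈ S := by
  constructor
  · intro hx
    obtain ⟨θ, hθS, hxθ⟩ := Set.mem_iUnion₂.1 hx
    rwa [F.proj_eq_of_mem h hxθ]
  · intro hS
    exact Set.mem_iUnion₂.2 ⟨_, hS, F.mem_τ_proj h x⟩

open Classical in
lemma plfn_eq_sum {X : Type} [Fintype X] (m : Set X → ℝ≥0) (x : X) :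
    plfn m x = ∑ S : Set X, if x ∈ S then m S else 0 := by
  classical
  rw [plfn, finsum_eq_sum_of_fintype]
  exact Finset.sum_congr rfl fun S _ => finsum_eq_if

/-- The likelihood function of the combination of two set potentials
is the combination of their likelihood functions: `pl_{m₁·m₂} = pl_{m₁} · pl_{m₂}`. -/
theorem plfn_setCombine (F : FCF) (Θ₁ Θ₂ : F.Frame)
    (m₁ : Set (F.El Θ₁) → ℝ≥0) (m₂ : Set (F.El Θ₂) → ℝ≥0) :
    ∀ x : F.El (F.sup Θ₁ Θ₂),
      plfn (F.setCombine m₁ m₂) x =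
        plfn m₁ (F.proj (F.le_sup_left Θ₁ Θ₂) x) *
        plfn m₂ (F.proj (F.le_sup_right Θ₁ Θ₂) x) := by
  classical
  intro x
  set h₁ := F.le_sup_left Θ₁ Θ₂ with hh₁
  set h₂ := F.le_sup_right Θ₁ Θ₂ with hh₂
  set B : Set (F.El Θ₁) → Set (F.El Θ₂) → Set (F.El (F.sup Θ₁ Θ₂)) :=
    fun S₁ S₂ => (⋃ θ ∈ S₁, F.τ h₁ θ) ∩ (⋃ θ ∈ S₂, F.τ h₂ θ) with hB
  have sc : ∀ S : Set (F.El (F.sup Θ₁ Θ₂)),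
      F.setCombine m₁ m₂ S =
        ∑ S₁ : Set (F.El Θ₁), ∑ S₂ : Set (F.El Θ₂),
          if B S₁ S₂ = S then m₁ S₁ * m₂ S₂ else 0 := by
    intro S
    rw [setCombine, finsum_eq_sum_of_fintype]
    refine Finset.sum_congr rfl fun S₁ _ => ?_
    rw [finsum_eq_sum_of_fintype]
    exact Finset.sum_congr rfl fun S₂ _ => finsum_eq_if
  rw [plfn_eq_sum, plfn_eq_sum, plfn_eq_sum]
  calc
    (∑ S : Set (F.El (F.sup Θ₁ Θ₂)), if x ∈ S then F.setCombine m₁ m₂ S else 0)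
        = ∑ S : Set (F.El (F.sup Θ₁ Θ₂)), ∑ S₁ : Set (F.El Θ₁),
            ∑ S₂ : Set (F.El Θ₂),
            if x ∈ S then (if B S₁ S₂ = S then m₁ S₁ * m₂ S₂ else 0) else 0 := by
          refine Finset.sum_congr rfl fun S _ => ?_
          rw [sc S]
          split_ifs with hx
          · rfl
          · simp
    _ = ∑ S₁ : Set (F.El Θ₁), ∑ S₂ : Set (F.El Θ₂),
          ∑ S : Set (F.El (F.sup Θ₁ Θ₂)),
            if x ∈ S then (if B S₁ S₂ = S then m₁ S₁ * m₂ S₂ else 0) else 0 := by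
          rw [Finset.sum_comm]
          exact Finset.sum_congr rfl fun S₁ _ => Finset.sum_comm
    _ = ∑ S₁ : Set (F.El Θ₁), ∑ S₂ : Set (F.El Θ₂),
          if x ∈ B S₁ S₂ then m₁ S₁ * m₂ S₂ else 0 := by
          refine Finset.sum_congr rfl fun S₁ _ => Finset.sum_congr rfl fun S₂ _ => ?_
          rw [Finset.sum_eq_single (B S₁ S₂)]
          · simp
          · intro S _ hS
            split_ifs with h h'
            · exact absurd h'.symm hS
            · rfl
            · rfl
          · intro h
            exact absurd (Finset.mem_univ _) h
    _ = ∑ S₁ : Set (F.El Θ₁), ∑ S₂ : Set (F.El Θ₂),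
          (if F.proj h₁ x ∈ S₁ then m₁ S₁ else 0) *
          (if F.proj h₂ x ∈ S₂ then m₂ S₂ else 0) := by
          refine Finset.sum_congr rfl fun S₁ _ => Finset.sum_congr rfl fun S₂ _ => ?_
          have hx : x ∈ B S₁ S₂ ↔ (F.proj h₁ x ∈ S₁ ∧ F.proj h₂ x ∈ S₂) := by
            rw [hB]
            simp only [Set.mem_inter_iff, F.mem_blocks_iff h₁ x S₁,
              F.mem_blocks_iff h₂ x S₂]
          by_cases h1 : F.proj h₁ x ∈ S₁ <;> by_cases h2 : F.proj h₂ x ∈ S₂ <;>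
            simp [hx, h1, h2]
    _ = (∑ S₁ : Set (F.El Θ₁), if F.proj h₁ x ∈ S₁ then m₁ S₁ else 0) *
        (∑ S₂ : Set (F.El Θ₂), if F.proj h₂ x ∈ S₂ then m₂ S₂ else 0) := by
          rw [Finset.sum_mul_sum]

end FCF
end

section
/- Let Λ ≤ Θ be frames of a family of compatible frames and let p be a probability potential with Θ ≤ d(p). Then π_Λ(p) = π_Λ(π_Θ(p)). -/
open scoped NNReal

namespace FCF

/-- Key lemma: given a common refinement `Ξ` of `Δ` and `Λ` which is itself a
coarsening of `Δ`, the blocks of `δ` and `lam` in `Ξ` intersect iff `δ` belongs to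
the block of `lam` in `Δ`. -/
theorem block_compat (F : FCF) {Δ Λ Ξ : F.Frame} (hA : F.le Δ Ξ) (hB : F.le Λ Ξ)
    (hΞΔ : F.le Ξ Δ) (hΛΔ : F.le Λ Δ) (δ : F.El Δ) (lam : F.El Λ) :
    (F.τ hA δ ∩ F.τ hB lam).Nonempty ↔ δ ∈ F.τ hΛΔ lam := by
  have hid : F.τ (F.le_refl Δ) δ = ⋃ x ∈ F.τ hA δ, F.τ hΞΔ x :=
    F.τ_comp hA hΞΔ (F.le_refl Δ) δ
  rw [F.τ_refl] at hid
  have hcomp : F.τ hΛΔ lam = ⋃ x ∈ F.τ hB lam, F.τ hΞΔ x :=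
    F.τ_comp hB hΞΔ hΛΔ lam
  constructor
  · rintro ⟨x, hx1, hx2⟩
    obtain ⟨y, hy⟩ := F.τ_nonempty hΞΔ x
    have hyδ : y ∈ ({δ} : Set (F.El Δ)) := by
      rw [hid]; exact Set.mem_biUnion hx1 hy
    rw [Set.mem_singleton_iff] at hyδ
    subst hyδ
    rw [hcomp]; exact Set.mem_biUnion hx2 hy
  · intro hδ
    rw [hcomp] at hδ
    obtain ⟨x, hx, hδx⟩ := Set.mem_iUnion₂.mp hδ
    have hδδ : δ ∈ ({δ} : Set (F.El Δ)) := rfl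
    rw [hid] at hδδ
    obtain ⟨y, hy, hδy⟩ := Set.mem_iUnion₂.mp hδδ
    have hxy : x = y := by
      by_contra hne
      have := F.τ_disjoint hΞΔ x y hne
      have : δ ∈ F.τ hΞΔ x ∩ F.τ hΞΔ y := ⟨hδx, hδy⟩
      rw [F.τ_disjoint hΞΔ x y hne] at this
      exact this
    exact ⟨x, hxy ▸ hy, hx⟩

/-- `compat δ lam` (fine element first) iff `δ` is in the block of `lam`. -/
theorem compat_iff_left (F : FCF) {Δ Λ : F.Frame} (h : F.le Λ Δ)
    (δ : F.El Δ) (lam : F.El Λ) : F.compat δ lam ↔ δ ∈ F.τ h lam :=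
  F.block_compat (F.le_sup_left Δ Λ) (F.le_sup_right Δ Λ)
    (F.sup_le (F.le_refl Δ) h) h δ lam

/-- `compat lam δ` (fine element second) iff `δ` is in the block of `lam`. -/
theorem compat_iff_right (F : FCF) {Δ Λ : F.Frame} (h : F.le Λ Δ)
    (δ : F.El Δ) (lam : F.El Λ) : F.compat lam δ ↔ δ ∈ F.τ h lam := by
  rw [compat, Set.inter_comm]
  exact F.block_compat (F.le_sup_right Λ Δ) (F.le_sup_left Λ Δ)
    (F.sup_le h (F.le_refl Δ)) h δ lam

/-- If `Λ ≤ Θ ≤ d(p)`, then `π_Λ(p) = π_Λ(π_Θ(p))`. -/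
theorem transport_transport (F : FCF) (Δ Θ Λ : F.Frame)
    (hΛΘ : F.le Λ Θ) (hΘΔ : F.le Θ Δ) (p : F.Pot Δ) :
    F.transport p Λ = F.transport (F.transport p Θ) Λ := by
  classical
  have hΛΔ : F.le Λ Δ := F.le_trans hΛΘ hΘΔ
  funext lam
  have hL : F.transport p Λ lam
      = ∑ δ ∈ Finset.univ.filter (· ∈ F.τ hΛΔ lam), p δ :=
    finsum_cond_eq_sum_of_cond_iff _ (fun {δ} _ => by
      simp [F.compat_iff_left hΛΔ])
  have hR : F.transport (F.transport p Θ) Λ lam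
      = ∑ θ ∈ Finset.univ.filter (· ∈ F.τ hΛΘ lam), F.transport p Θ θ :=
    finsum_cond_eq_sum_of_cond_iff _ (fun {θ} _ => by
      simp [F.compat_iff_left hΛΘ])
  have hRin : ∀ θ, F.transport p Θ θ
      = ∑ δ ∈ Finset.univ.filter (· ∈ F.τ hΘΔ θ), p δ := fun θ =>
    finsum_cond_eq_sum_of_cond_iff _ (fun {δ} _ => by
      simp [F.compat_iff_left hΘΔ])
  rw [hL, hR]
  simp_rw [hRin]
  rw [← Finset.sum_biUnion]
  · congr 1
    ext δ
    simp only [Finset.mem_biUnion, Finset.mem_filter, Finset.mem_univ, true_and]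
    rw [F.τ_comp hΛΘ hΘΔ hΛΔ lam, Set.mem_iUnion₂]
    exact exists_congr fun a => by tauto
  · intro a ha b hb hab
    simp only [Finset.coe_filter, Finset.mem_univ, true_and] at *
    apply Finset.disjoint_left.mpr
    intro δ hδa hδb
    simp only [Finset.mem_filter] at hδa hδb
    have : δ ∈ F.τ hΘΔ a ∩ F.τ hΘΔ b := ⟨hδa.2, hδb.2⟩
    rw [F.τ_disjoint hΘΔ a b hab] at this
    exact this

end FCF
end
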